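/- arXiv:2602.21382 — 6 statements merged into one kernel-verified Lean document; each statement's English description precedes it below -/
import Mathlib

section
/- Every k-uniform threshold hypergraph given by a binary sequence satisfies the replacement property: for every pair of vertices x, y, either x ≪ y or y ≪ x, where x ≪ y means that for every (k-1)-subset {x_1,...,x_{k-1}} of V − {x,y}, if {x, x_1,...,x_{k-1}} is an edge then {y, x_1,...,x_{k-1}} is an edge. -/
/-- Binomial coefficient with integer lower index; `bino m r = 0` when `r < 0`. -/
def bino (m : ℕ) (r : ℤ) : ℕ := if 0 ≤ r then m.choose r.toNat else 0

/-- `e` is an edge of the `k`-uniform threshold hypergraph on `Fin n` given by the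
binary sequence `b`: `e` is a `k`-subset whose maximal vertex `j` satisfies `b j = true`. -/
def isEdge (n k : ℕ) (b : Fin n → Bool) (e : Finset (Fin n)) : Prop :=
  e.card = k ∧ ∃ j ∈ e, (∀ i ∈ e, i ≤ j) ∧ b j = true

/-- Number of edges containing both vertices `x` and `y`. -/
noncomputable def edgeCount (n k : ℕ) (b : Fin n → Bool) (x y : Fin n) : ℕ :=
  Set.ncard {e : Finset (Fin n) | isEdge n k b e ∧ x ∈ e ∧ y ∈ e}

/-- The (ℕ-valued) adjacency matrix of the threshold hypergraph. -/
noncomputable def adjN (n k : ℕ) (b : Fin n → Bool) : Matrix (Fin n) (Fin n) ℕ :=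
  fun i j => if i = j then 0 else edgeCount n k b i j

/-- The real adjacency matrix of the threshold hypergraph. -/
noncomputable def adjMat (n k : ℕ) (b : Fin n → Bool) : Matrix (Fin n) (Fin n) ℝ :=
  fun i j => if i = j then 0 else (edgeCount n k b i j : ℝ)

/-- Dimension of the eigenspace of a real matrix `A` at eigenvalue `μ`. -/
noncomputable def eigMult (n : ℕ) (A : Matrix (Fin n) (Fin n) ℝ) (μ : ℝ) : ℕ :=
  Module.finrank ℝ (Module.End.eigenspace (Matrix.toLin' A) μ)

/-- `x ≪ y`: `x` may be replaced by `y` in any edge. -/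
def repl (n k : ℕ) (b : Fin n → Bool) (x y : Fin n) : Prop :=
  ∀ S : Finset (Fin n), S.card = k - 1 → x ∉ S → y ∉ S →
    isEdge n k b (insert x S) → isEdge n k b (insert y S)


lemma repl_lt_of_btrue (n k : ℕ) (b : Fin n → Bool) {x y : Fin n} (hxy : x < y)
    (hby : b y = true) : repl n k b x y := by
  intro S hS hxS hyS ⟨hcard, j, hjmem, hjmax, hbj⟩
  refine ⟨?_, ?_⟩
  · rw [Finset.card_insert_of_notMem hyS]
    rw [Finset.card_insert_of_notMem hxS] at hcard
    exact hcard
  · by_cases hyj : y ≤ j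
    · have hjx : j ≠ x := fun h => absurd (lt_of_lt_of_le hxy hyj) (h ▸ lt_irrefl x)
      have hjS : j ∈ S := by
        rcases Finset.mem_insert.mp hjmem with h | h
        · exact absurd h hjx
        · exact h
      refine ⟨j, Finset.mem_insert_of_mem hjS, ?_, hbj⟩
      intro i hi
      rcases Finset.mem_insert.mp hi with h | h
      · exact h ▸ hyj
      · exact hjmax i (Finset.mem_insert_of_mem h)
    · refine ⟨y, Finset.mem_insert_self y S, ?_, hby⟩
      intro i hi
      rcases Finset.mem_insert.mp hi with h | h
      · exact h ▸ le_refl y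
      · exact le_of_lt (lt_of_le_of_lt (hjmax i (Finset.mem_insert_of_mem h)) (lt_of_not_ge hyj))

lemma repl_gt_of_bfalse (n k : ℕ) (b : Fin n → Bool) {x y : Fin n} (hxy : x < y)
    (hby : b y = false) : repl n k b y x := by
  intro S hS hyS hxS ⟨hcard, j, hjmem, hjmax, hbj⟩
  have hjy : j ≠ y := fun h => by simp [h, hby] at hbj
  have hjS : j ∈ S := by
    rcases Finset.mem_insert.mp hjmem with h | h
    · exact absurd h hjy
    · exact h
  have hyj : y ≤ j := hjmax y (Finset.mem_insert_self y S)
  refine ⟨?_, j, Finset.mem_insert_of_mem hjS, ?_, hbj⟩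
  · rw [Finset.card_insert_of_notMem hxS]
    rw [Finset.card_insert_of_notMem hyS] at hcard
    exact hcard
  · intro i hi
    rcases Finset.mem_insert.mp hi with h | h
    · exact h ▸ le_of_lt (lt_of_lt_of_le hxy hyj)
    · exact hjmax i (Finset.mem_insert_of_mem h)

/-- Every `k`-uniform threshold hypergraph given by a binary sequence satisfies the
replacement property: any two vertices are comparable under `≪`. -/
theorem threshold_repl_total (n k : ℕ) (hk : 2 ≤ k) (b : Fin n → Bool)
    (hprefix : ∀ i : Fin n, (i : ℕ) < k - 1 → b i = false) :
    ∀ x y : Fin n, repl n k b x y ∨ repl n k b y x := by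
  intro x y
  rcases lt_trichotomy x y with h | h | h
  · cases hb : b y with
    | true => exact Or.inl (repl_lt_of_btrue n k b h hb)
    | false => exact Or.inr (repl_gt_of_bfalse n k b h hb)
  · subst h
    exact Or.inl (fun S _ _ _ he => he)
  · cases hb : b x with
    | true => exact Or.inr (repl_lt_of_btrue n k b h hb)
    | false => exact Or.inl (repl_gt_of_bfalse n k b h hb)
end

section
/- Let H and H' be k-uniform threshold hypergraphs with distinct binary sequences (b_i) and (b'_i), and let j = max{i : b_i ≠ b'_i}, with b_j = 1, b'_j = 0, and k ≤ j < n. Then the (1,j) entries of their adjacency matrices differ; specifically a_{1,j} = a'_{1,j} + C(j−2, k−2), where a_{1,j} counts edges of H containing v_1 and v_j. -/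
/-- If the binary sequences of `H` and `H'` agree after position `j` and differ at `j`,
with `b j = 1`, `b' j = 0` and `k ≤ j < n` (1-based; here 0-based `k - 1 ≤ j < n - 1`),
then the `(1, j)` entries of the adjacency matrices satisfy
`a_{1,j} = a'_{1,j} + C(j - 2, k - 2)` (with 1-based `j`). -/
theorem entry_one_j_differs (n k : ℕ) (hk : 2 ≤ k) (b b' : Fin n → Bool)
    (hprefix : ∀ i : Fin n, (i : ℕ) < k - 1 → b i = false)
    (hprefix' : ∀ i : Fin n, (i : ℕ) < k - 1 → b' i = false)
    (j : Fin n) (hne : b j ≠ b' j) (hmaxdiff : ∀ i : Fin n, j < i → b i = b' i)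
    (hbj : b j = true) (hb'j : b' j = false)
    (hkj : k - 1 ≤ (j : ℕ)) (hjn : (j : ℕ) < n - 1) :
    edgeCount n k b ⟨0, by have := j.isLt; omega⟩ j =
      edgeCount n k b' ⟨0, by have := j.isLt; omega⟩ j + ((j : ℕ) - 1).choose (k - 2) := by
  set x : Fin n := ⟨0, by have := j.isLt; omega⟩ with hxdef
  have hxval : (x : ℕ) = 0 := rfl
  have hxj : x < j := by rw [Fin.lt_def]; omega
  have hxlt : ∀ i : Fin n, i ≠ x → x < i := by
    intro i hi
    rw [Fin.lt_def, hxval]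
    rcases Nat.eq_zero_or_pos (i : ℕ) with h | h
    · exact absurd (Fin.ext (h.trans hxval.symm)) hi
    · exact h
  set A : Set (Finset (Fin n)) := {e | isEdge n k b e ∧ x ∈ e ∧ j ∈ e} with hA
  set B : Set (Finset (Fin n)) := {e | isEdge n k b' e ∧ x ∈ e ∧ j ∈ e} with hB
  set C : Set (Finset (Fin n)) := {e | e.card = k ∧ x ∈ e ∧ j ∈ e ∧ ∀ i ∈ e, i ≤ j} with hC
  have hdisj : Disjoint B C := by
    rw [Set.disjoint_left]
    rintro e ⟨⟨hc, m, hm, hmax, hbm⟩, hxe, hje⟩ ⟨_, _, _, hle⟩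
    have hmj : m = j := le_antisymm (hle m hm) (hmax j hje)
    rw [hmj, hb'j] at hbm; exact Bool.noConfusion hbm
  have hAeq : A = B ∪ C := by
    ext e
    constructor
    · rintro ⟨⟨hc, m, hm, hmax, hbm⟩, hxe, hje⟩
      rcases lt_or_eq_of_le (hmax j hje) with h | h
      · left; exact ⟨⟨hc, m, hm, hmax, by rw [← hmaxdiff m h]; exact hbm⟩, hxe, hje⟩
      · right; exact ⟨hc, hxe, hje, fun i hi => h ▸ hmax i hi⟩
    · rintro (⟨⟨hc, m, hm, hmax, hbm⟩, hxe, hje⟩ | ⟨hc, hxe, hje, hle⟩)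
      · refine ⟨⟨hc, m, hm, hmax, ?_⟩, hxe, hje⟩
        rcases lt_or_eq_of_le (hmax j hje) with h | h
        · rw [hmaxdiff m h]; exact hbm
        · rw [← h, hb'j] at hbm; exact Bool.noConfusion hbm
      · exact ⟨⟨hc, j, hje, hle, hbj⟩, hxe, hje⟩
  have hcount : edgeCount n k b x j = edgeCount n k b' x j + C.ncard := by
    show A.ncard = B.ncard + C.ncard
    rw [hAeq, Set.ncard_union_eq hdisj (Set.toFinite _) (Set.toFinite _)]
  rw [hcount]
  congr 1
  -- count C
  have hjs : j ∉ (Finset.Ioo x j : Finset (Fin n)) := by simp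
  have hxnotmem : ∀ s : Finset (Fin n), s ⊆ Finset.Ioo x j → x ∉ insert j s := by
    intro s hs
    simp only [Finset.mem_insert]
    rintro (h | h)
    · exact absurd h (Fin.ne_of_lt hxj)
    · exact absurd (Finset.mem_Ioo.mp (hs h)).1 (lt_irrefl x)
  have hCeq : C = ↑(((Finset.Ioo x j).powersetCard (k-2)).image
      (fun s => insert x (insert j s))) := by
    ext e
    simp only [Finset.coe_image, Set.mem_image, Finset.mem_coe, Finset.mem_powersetCard,
      hC, Set.mem_setOf_eq]
    constructor
    · rintro ⟨hc, hxe, hje, hle⟩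
      refine ⟨(e.erase j).erase x, ⟨?_, ?_⟩, ?_⟩
      · intro i hi
        simp only [Finset.mem_erase] at hi
        obtain ⟨hix, hij, hie⟩ := hi
        exact Finset.mem_Ioo.mpr ⟨hxlt i hix, lt_of_le_of_ne (hle i hie) hij⟩
      · rw [Finset.card_erase_of_mem, Finset.card_erase_of_mem hje, hc]
        · omega
        · exact Finset.mem_erase.mpr ⟨Fin.ne_of_lt hxj, hxe⟩
      · ext i
        simp only [Finset.mem_insert, Finset.mem_erase]
        constructor
        · rintro (h | h | ⟨_, _, h⟩)
          · exact h ▸ hxe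
          · exact h ▸ hje
          · exact h
        · intro hi
          by_cases h1 : i = x
          · exact Or.inl h1
          by_cases h2 : i = j
          · exact Or.inr (Or.inl h2)
          · exact Or.inr (Or.inr ⟨h1, h2, hi⟩)
    · rintro ⟨s, ⟨hs, hcard⟩, rfl⟩
      have hjons : j ∉ s := fun h => hjs (hs h)
      have hxnot := hxnotmem s hs
      refine ⟨?_, Finset.mem_insert_self _ _,
        Finset.mem_insert_of_mem (Finset.mem_insert_self _ _), ?_⟩
      · rw [Finset.card_insert_of_notMem hxnot, Finset.card_insert_of_notMem hjons, hcard]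
        omega
      · intro i hi
        simp only [Finset.mem_insert] at hi
        rcases hi with h | h | h
        · exact h ▸ le_of_lt hxj
        · exact h ▸ le_refl j
        · exact le_of_lt (Finset.mem_Ioo.mp (hs h)).2
  rw [hCeq, Set.ncard_coe_finset, Finset.card_image_of_injOn, Finset.card_powersetCard]
  · congr 1
    rw [Fin.card_Ioo]
    omega
  · intro s hs t ht hst
    simp only [Finset.mem_coe, Finset.mem_powersetCard] at hs ht
    have h1 : insert j s = insert j t := by
      have := congrArg (fun u => Finset.erase u x) hst
      simpa [Finset.erase_insert (hxnotmem s hs.1), Finset.erase_insert (hxnotmem t ht.1)]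
        using this
    have := congrArg (fun u => Finset.erase u j) h1
    simpa [Finset.erase_insert (fun h => hjs (hs.1 h)),
      Finset.erase_insert (fun h => hjs (ht.1 h))] using this
end

section
/- Let H be the k-uniform threshold hypergraph with binary sequence (0,...,0,1) of length n > k (only the last entry is 1), and let A be its adjacency matrix. Then −C(n−3, k−3) is an eigenvalue of A with multiplicity at least n − 2. -/
open Finset

/-- The number of `k`-subsets of `Fin n` containing a fixed set `t` of size ≤ `k`. -/
lemma card_supersets {n k : ℕ} (t : Finset (Fin n)) (ht : t.card ≤ k) :
    ((Finset.univ.powersetCard k).filter (fun e => t ⊆ e)).card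
      = (n - t.card).choose (k - t.card) := by
  have hcu : ((Finset.univ : Finset (Fin n)) \ t).card = n - t.card := by
    rw [Finset.card_sdiff_of_subset (Finset.subset_univ t), Finset.card_univ, Fintype.card_fin]
  rw [← hcu, ← Finset.card_powersetCard (k - t.card) ((Finset.univ : Finset (Fin n)) \ t)]
  apply Finset.card_bij' (fun e _ => e \ t) (fun s _ => s ∪ t)
  · intro e he
    rw [Finset.mem_filter, Finset.mem_powersetCard_univ] at he
    rw [Finset.mem_powersetCard]
    exact ⟨Finset.sdiff_subset_sdiff (Finset.subset_univ e) (le_refl t),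
      by rw [Finset.card_sdiff_of_subset he.2, he.1]⟩
  · intro s hs
    rw [Finset.mem_powersetCard] at hs
    have hdisj : Disjoint s t := Finset.disjoint_of_subset_left hs.1 Finset.sdiff_disjoint
    rw [Finset.mem_filter, Finset.mem_powersetCard_univ]
    constructor
    · rw [Finset.card_union_of_disjoint hdisj, hs.2]
      omega
    · exact Finset.subset_union_right
  · intro e he
    rw [Finset.mem_filter] at he
    exact Finset.sdiff_union_of_subset he.2
  · intro s hs
    rw [Finset.mem_powersetCard] at hs
    have hdisj : Disjoint s t := Finset.disjoint_of_subset_left hs.1 Finset.sdiff_disjoint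
    exact Finset.union_sdiff_cancel_right hdisj

/-- The edge set through `x` and `y` is the set of `k`-subsets containing `x`, `y` and
the last vertex. -/
lemma edgeSet_eq (n k : ℕ) (hn : 1 ≤ n) (x y : Fin n) :
    {e : Finset (Fin n) | isEdge n k (fun i => decide ((i : ℕ) = n - 1)) e ∧ x ∈ e ∧ y ∈ e}
      = ↑((Finset.univ.powersetCard k).filter
          (fun e => ({x, y, ⟨n - 1, by omega⟩} : Finset (Fin n)) ⊆ e)) := by
  ext e
  simp only [Set.mem_setOf_eq, Finset.coe_filter, Finset.mem_powersetCard_univ, isEdge,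
    Finset.insert_subset_iff, Finset.singleton_subset_iff, Set.mem_setOf_eq]
  constructor
  · rintro ⟨⟨hc, j, hje, _, hbj⟩, hx, hy⟩
    have hj : j = ⟨n - 1, by omega⟩ := Fin.ext (by simpa using hbj)
    exact ⟨hc, hx, hy, hj ▸ hje⟩
  · rintro ⟨hc, hx, hy, hl⟩
    refine ⟨⟨hc, ⟨n - 1, by omega⟩, hl, fun i _ => ?_, by simp⟩, hx, hy⟩
    rw [Fin.le_def]
    exact Nat.le_pred_of_lt i.isLt

lemma edgeCount_val (n k : ℕ) (hk : 2 ≤ k) (hn : k < n) (x y : Fin n)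
    (hxy : x ≠ y) (hx : (x : ℕ) ≠ n - 1) (hy : (y : ℕ) ≠ n - 1) :
    edgeCount n k (fun i => decide ((i : ℕ) = n - 1)) x y = bino (n - 3) ((k : ℤ) - 3) := by
  have h1 : 1 ≤ n := by omega
  have hlast : (⟨n - 1, by omega⟩ : Fin n) ∉ ({x, y} : Finset (Fin n)) := by
    simp only [Finset.mem_insert, Finset.mem_singleton]
    rintro (h | h) <;> [exact hx (congrArg Fin.val h.symm); exact hy (congrArg Fin.val h.symm)]
  have hcard : ({x, y, ⟨n - 1, by omega⟩} : Finset (Fin n)).card = 3 := by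
    rw [show ({x, y, ⟨n - 1, by omega⟩} : Finset (Fin n))
        = insert (⟨n - 1, by omega⟩ : Fin n) {x, y} by
      ext a; simp [Finset.mem_insert, Finset.mem_singleton]; tauto]
    rw [Finset.card_insert_of_notMem hlast, Finset.card_insert_of_notMem (by simpa using hxy),
      Finset.card_singleton]
  rw [edgeCount, edgeSet_eq n k h1 x y, Set.ncard_coe_finset]
  by_cases h3 : 3 ≤ k
  · rw [card_supersets _ (by omega : _ ≤ k), hcard, bino, if_pos (by omega : (0:ℤ) ≤ (k:ℤ) - 3)]
    congr 1
    omega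
  · have hk2 : k = 2 := by omega
    rw [bino, if_neg (by omega : ¬ (0:ℤ) ≤ (k:ℤ) - 3)]
    rw [Finset.card_eq_zero, Finset.filter_eq_empty_iff]
    intro e he
    rw [Finset.mem_powersetCard_univ] at he
    intro hsub
    have := Finset.card_le_card hsub
    omega

lemma edgeCount_last_val (n k : ℕ) (hk : 2 ≤ k) (hn : k < n) (y : Fin n)
    (hy : (y : ℕ) ≠ n - 1) :
    edgeCount n k (fun i => decide ((i : ℕ) = n - 1)) ⟨n - 1, by omega⟩ y
      = (n - 2).choose (k - 2) := by
  have h1 : 1 ≤ n := by omega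
  have hne : (⟨n - 1, by omega⟩ : Fin n) ≠ y := fun h => hy (congrArg Fin.val h.symm)
  have hcard : ({⟨n - 1, by omega⟩, y, ⟨n - 1, by omega⟩} : Finset (Fin n)).card = 2 := by
    rw [show ({⟨n - 1, by omega⟩, y, ⟨n - 1, by omega⟩} : Finset (Fin n))
        = {(⟨n - 1, by omega⟩ : Fin n), y} by ext a; simp; tauto]
    rw [Finset.card_insert_of_notMem (by simpa using hne), Finset.card_singleton]
  rw [edgeCount, edgeSet_eq n k h1 _ y, Set.ncard_coe_finset,
    card_supersets _ (by omega : _ ≤ k), hcard]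

/-- For the `k`-uniform threshold hypergraph with binary sequence `(0, …, 0, 1)` of
length `n > k`, `-C(n-3, k-3)` is an eigenvalue of the adjacency matrix with
multiplicity at least `n - 2`. -/
theorem single_one_eigenvalue (n k : ℕ) (hk : 2 ≤ k) (hn : k < n) :
    n - 2 ≤ eigMult n (adjMat n k (fun i => decide ((i : ℕ) = n - 1)))
      (-(bino (n - 3) ((k : ℤ) - 3) : ℝ)) := by
  set b : Fin n → Bool := fun i => decide ((i : ℕ) = n - 1) with hb
  set c : ℕ := bino (n - 3) ((k : ℤ) - 3) with hc
  set A : Matrix (Fin n) (Fin n) ℝ := adjMat n k b with hA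
  set last : Fin n := ⟨n - 1, by omega⟩ with hlast
  -- the linear functional whose kernel is the candidate eigenspace
  set L : (Fin n → ℝ) →ₗ[ℝ] ℝ × ℝ :=
    LinearMap.prod (LinearMap.proj last) (∑ i : Fin n, LinearMap.proj i) with hL
  have hker : LinearMap.ker L ≤ Module.End.eigenspace (Matrix.toLin' A) (-(c : ℝ)) := by
    intro v hv
    rw [LinearMap.mem_ker] at hv
    have hvl : v last = 0 := congrArg Prod.fst hv
    have hvs : ∑ i, v i = 0 := by
      have h2 := congrArg Prod.snd hv
      simpa [hL, LinearMap.sum_apply] using h2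
    rw [Module.End.mem_eigenspace_iff, Matrix.toLin'_apply]
    funext j
    show ∑ i, A j i * v i = (-(c : ℝ) • v) j
    rw [Pi.smul_apply, smul_eq_mul]
    by_cases hj : j = last
    · subst hj
      have hz : A last last * v last = 0 := by
        simp [hA, adjMat]
      rw [← Finset.sum_erase_add _ _ (Finset.mem_univ last), hz, add_zero]
      have hsum : ∑ i ∈ Finset.univ.erase last, A last i * v i
          = ∑ i ∈ Finset.univ.erase last, ((n - 2).choose (k - 2) : ℝ) * v i := by
        apply Finset.sum_congr rfl
        intro i hi
        rw [Finset.mem_erase] at hi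
        have hi' : (i : ℕ) ≠ n - 1 := fun h => hi.1 (Fin.ext h)
        rw [hA, adjMat]
        rw [if_neg (fun h => hi.1 h.symm), edgeCount_last_val n k hk hn i hi']
      rw [hsum, ← Finset.mul_sum, Finset.sum_erase_eq_sub (Finset.mem_univ last), hvs, hvl]
      ring
    · have hj' : (j : ℕ) ≠ n - 1 := fun h => hj (Fin.ext h)
      have hz : A j j * v j = 0 := by simp [hA, adjMat]
      rw [← Finset.sum_erase_add _ _ (Finset.mem_univ j), hz, add_zero]
      have hsum : ∑ i ∈ Finset.univ.erase j, A j i * v i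
          = ∑ i ∈ Finset.univ.erase j, (c : ℝ) * v i := by
        apply Finset.sum_congr rfl
        intro i hi
        rw [Finset.mem_erase] at hi
        by_cases hil : i = last
        · rw [hil, hvl, mul_zero, mul_zero]
        · have hi' : (i : ℕ) ≠ n - 1 := fun h => hil (Fin.ext h)
          rw [hA, adjMat]
          rw [if_neg (Ne.symm hi.1), edgeCount_val n k hk hn j i (Ne.symm hi.1) hj' hi', hc]
      rw [hsum, ← Finset.mul_sum, Finset.sum_erase_eq_sub (Finset.mem_univ j), hvs]
      ring
  have hfr : Module.finrank ℝ (LinearMap.ker L) + Module.finrank ℝ (LinearMap.range L)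
      = n := by
    have h1 := LinearMap.finrank_range_add_finrank_ker L
    rw [Module.finrank_pi, Fintype.card_fin] at h1
    omega
  have hrange : Module.finrank ℝ (LinearMap.range L) ≤ 2 := by
    have h2 : Module.finrank ℝ (ℝ × ℝ) = 2 := by
      simp [Module.finrank_prod]
    calc Module.finrank ℝ (LinearMap.range L) ≤ Module.finrank ℝ (ℝ × ℝ) :=
          Submodule.finrank_le _
      _ = 2 := h2
  have hklow : n - 2 ≤ Module.finrank ℝ (LinearMap.ker L) := by omega
  calc n - 2 ≤ Module.finrank ℝ (LinearMap.ker L) := hklow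
    _ ≤ eigMult n A (-(c : ℝ)) := Submodule.finrank_mono hker
end

section
/- The spectrum of the k-uniform threshold hypergraph with binary sequence (0,...,0,1) of length n > k consists of the eigenvalue −C(n−3,k−3) with multiplicity n−2, together with the two roots of x^2 − a(n−2)x − b^2(n−1), where a = C(n−3,k−3) and b = C(n−2,k−2). -/
section Aux
open Matrix Polynomial Finset

lemma ncard_supersets {n k : ℕ} (s : Finset (Fin n)) (h : s.card ≤ k) :
    Set.ncard {e : Finset (Fin n) | e.card = k ∧ s ⊆ e}
      = (n - s.card).choose (k - s.card) := by
  classical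
  have hdisj : ∀ t : Finset (Fin n), t ⊆ Finset.univ \ s → Disjoint t s := by
    intro t ht
    exact Finset.disjoint_left.mpr fun x hx => (Finset.mem_sdiff.mp (ht hx)).2
  have hset : {e : Finset (Fin n) | e.card = k ∧ s ⊆ e}
      = ↑(((Finset.univ \ s).powersetCard (k - s.card)).image (· ∪ s)) := by
    ext e
    simp only [Set.mem_setOf_eq, Finset.coe_image, Set.mem_image, Finset.mem_coe,
      Finset.mem_powersetCard]
    constructor
    · rintro ⟨hc, hs⟩
      refine ⟨e \ s, ⟨Finset.sdiff_subset_sdiff (Finset.subset_univ e) le_rfl, ?_⟩,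
        Finset.sdiff_union_of_subset hs⟩
      rw [Finset.card_sdiff_of_subset hs, hc]
    · rintro ⟨t, ⟨ht, htc⟩, rfl⟩
      refine ⟨?_, Finset.subset_union_right⟩
      rw [Finset.card_union_of_disjoint (hdisj t ht), htc, Nat.sub_add_cancel h]
  rw [hset, Set.ncard_coe_finset, Finset.card_image_of_injOn, Finset.card_powersetCard,
    Finset.card_sdiff_of_subset (Finset.subset_univ s), Finset.card_univ, Fintype.card_fin]
  intro t1 h1 t2 h2 he
  simp only [Finset.mem_coe, Finset.mem_powersetCard] at h1 h2
  simp only at he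
  rw [← Finset.union_sdiff_cancel_right (hdisj t1 h1.1), he,
    Finset.union_sdiff_cancel_right (hdisj t2 h2.1)]

lemma ncard_supersets_zero {n k : ℕ} (s : Finset (Fin n)) (h : k < s.card) :
    Set.ncard {e : Finset (Fin n) | e.card = k ∧ s ⊆ e} = 0 := by
  have : {e : Finset (Fin n) | e.card = k ∧ s ⊆ e} = ∅ := by
    ext e
    simp only [Set.mem_setOf_eq, Set.mem_empty_iff_false, iff_false, not_and]
    intro hc hs
    exact absurd (Finset.card_le_card hs) (by omega)
  rw [this, Set.ncard_empty]

lemma isEdge_iff {n k : ℕ} (l : Fin n) (hl : (l : ℕ) = n - 1) (e : Finset (Fin n)) :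
    isEdge n k (fun i => decide ((i : ℕ) = n - 1)) e ↔ e.card = k ∧ l ∈ e := by
  unfold isEdge
  constructor
  · rintro ⟨hc, j, hj, hmax, hb⟩
    have hjv : (j : ℕ) = n - 1 := by simpa using hb
    have : j = l := Fin.ext (by rw [hjv, hl])
    exact ⟨hc, this ▸ hj⟩
  · rintro ⟨hc, hmem⟩
    refine ⟨hc, l, hmem, fun i _ => ?_, by simp [hl]⟩
    have := i.isLt
    exact Fin.le_def.mpr (by omega)

lemma edgeCount_eq {n k : ℕ} (l : Fin n) (hl : (l : ℕ) = n - 1) (x y : Fin n) :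
    edgeCount n k (fun i => decide ((i : ℕ) = n - 1)) x y
      = Set.ncard {e : Finset (Fin n) |
          e.card = k ∧ ({l, x, y} : Finset (Fin n)) ⊆ e} := by
  unfold edgeCount
  congr 1
  ext e
  simp only [Set.mem_setOf_eq]
  rw [isEdge_iff l hl]
  simp [Finset.insert_subset_iff, and_assoc]

lemma eval_charpoly' {n : ℕ} (M : Matrix (Fin n) (Fin n) ℝ) (t : ℝ) :
    M.charpoly.eval t = (t • (1 : Matrix (Fin n) (Fin n) ℝ) - M).det := by
  rw [Matrix.charpoly, ← Polynomial.coe_evalRingHom, RingHom.map_det]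
  congr 1
  ext i j
  by_cases h : i = j
  · subst h
    simp [Matrix.charmatrix_apply_eq, Matrix.one_apply]
  · simp [Matrix.charmatrix_apply_ne _ _ _ h, Matrix.one_apply, h]

set_option linter.unreachableTactic false in
set_option linter.unusedTactic false in
lemma charpoly_special {n : ℕ} (hn : 2 ≤ n) (l : Fin n) (a b : ℝ) :
    (Matrix.of fun i j => if i = j then (0:ℝ) else if i = l ∨ j = l then b else a).charpoly
      = (X + C a) ^ (n - 2) *
        (X ^ 2 - C (a * ((n:ℝ) - 2)) * X - C (b ^ 2 * ((n:ℝ) - 1))) := by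
  set A : Matrix (Fin n) (Fin n) ℝ :=
    Matrix.of fun i j => if i = j then (0:ℝ) else if i = l ∨ j = l then b else a with hA
  set V : Matrix (Fin n) (Fin 2) ℝ :=
    Matrix.of (fun i p => if p = 0 then 1 else if i = l then 1 else 0) with hV
  set M : Matrix (Fin 2) (Fin 2) ℝ :=
    Matrix.of (fun p q => if p = 0 then (if q = 0 then a else b - a)
      else (if q = 0 then b - a else -2*(b-a))) with hM
  have hVMV : V * M * Vᵀ = A + a • 1 := by
    ext i j
    simp only [Matrix.mul_apply, Fin.sum_univ_two, hV, hM, hA, Matrix.transpose_apply,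
      Matrix.of_apply, Matrix.add_apply, Matrix.smul_apply, Matrix.one_apply, smul_eq_mul]
    by_cases hi : i = l <;> by_cases hj : j = l <;> by_cases hij : i = j <;>
      simp [hi, hj, hij] <;> ring_nf <;> simp_all <;> ring
  have hW : Vᵀ * V = Matrix.of (fun p q : Fin 2 =>
      if p = 0 then (if q = 0 then (n:ℝ) else 1) else (if q = 0 then 1 else 1)) := by
    ext p q
    fin_cases p <;> fin_cases q <;>
      simp [Matrix.mul_apply, hV, ite_mul, mul_ite, Finset.sum_ite_eq']
  have key : ∀ t : ℝ, t ≠ -a →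
      (A.charpoly).eval t =
        ((X + C a) ^ (n - 2) *
          (X ^ 2 - C (a * ((n:ℝ) - 2)) * X - C (b ^ 2 * ((n:ℝ) - 1)))).eval t := by
    intro t ht
    have hc : t + a ≠ 0 := fun h => ht (by linarith)
    rw [eval_charpoly']
    have h1 : t • (1 : Matrix (Fin n) (Fin n) ℝ) - A
        = (t + a) • 1 - V * M * Vᵀ := by
      rw [hVMV]
      ext i j
      simp only [Matrix.sub_apply, Matrix.smul_apply, Matrix.one_apply, Matrix.add_apply,
        smul_eq_mul]
      by_cases hij : i = j <;> simp [hij] <;> ring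
    set c : ℝ := t + a with hcdef
    have h2 : c • (1 : Matrix (Fin n) (Fin n) ℝ) - V * M * Vᵀ
        = c • (1 + ((-c⁻¹) • (V * M)) * Vᵀ) := by
      rw [smul_add, Matrix.smul_mul, smul_smul, mul_neg, mul_inv_cancel₀ hc]
      simp [sub_eq_add_neg]
    rw [h1, h2, Matrix.det_smul, Matrix.det_one_add_mul_comm, Fintype.card_fin]
    have h3 : Vᵀ * ((-c⁻¹) • (V * M)) = (-c⁻¹) • ((Vᵀ * V) * M) := by
      rw [Matrix.mul_smul, Matrix.mul_assoc]
    rw [h3, hW]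
    rw [Matrix.det_fin_two]
    simp only [Matrix.add_apply, Matrix.smul_apply, Matrix.one_apply, Matrix.mul_apply,
      Fin.sum_univ_two, Matrix.of_apply, hM, smul_eq_mul]
    norm_num
    have hnn : c ^ n = c ^ (n - 2) * c ^ 2 := by
      rw [← pow_add]
      congr 1
      omega
    rw [hnn, mul_assoc]
    simp only [hcdef]
    have hc' : t + a ≠ 0 := hc
    congr 1
    field_simp
    ring
  apply Polynomial.eq_of_infinite_eval_eq
  apply Set.Infinite.mono (s := {(-a : ℝ)}ᶜ)
  · intro x hx
    exact key x hx
  · exact (Set.finite_singleton (-a)).infinite_compl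

end Aux


open Polynomial in
/-- The spectrum of the `k`-uniform threshold hypergraph with binary sequence
`(0, …, 0, 1)` of length `n > k`: the characteristic polynomial of the adjacency
matrix is `(x + a)^(n-2) · (x^2 - a(n-2)x - b^2(n-1))`, where `a = C(n-3,k-3)` and
`b = C(n-2,k-2)`; i.e. the spectrum consists of `-C(n-3,k-3)` with multiplicity `n-2`
together with the two roots of the quadratic. -/
theorem single_one_spectrum (n k : ℕ) (hk : 2 ≤ k) (hn : k < n) :
    (adjMat n k (fun i => decide ((i : ℕ) = n - 1))).charpoly =
      (X + C (bino (n - 3) ((k : ℤ) - 3) : ℝ)) ^ (n - 2) *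
        (X ^ 2 - C ((bino (n - 3) ((k : ℤ) - 3) : ℝ) * ((n : ℝ) - 2)) * X -
          C (((n - 2).choose (k - 2) : ℝ) ^ 2 * ((n : ℝ) - 1))) := by
  have hn3 : 3 ≤ n := by omega
  set l : Fin n := ⟨n - 1, by omega⟩ with hldef
  have hl : (l : ℕ) = n - 1 := rfl
  have hAeq : adjMat n k (fun i => decide ((i : ℕ) = n - 1))
      = Matrix.of (fun i j => if i = j then (0:ℝ)
          else if i = l ∨ j = l then (((n - 2).choose (k - 2) : ℕ) : ℝ)
          else ((bino (n - 3) ((k : ℤ) - 3) : ℕ) : ℝ)) := by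
    ext i j
    simp only [adjMat, Matrix.of_apply]
    by_cases hij : i = j
    · simp [hij]
    · simp only [hij, if_false]
      rw [edgeCount_eq l hl]
      by_cases hi : i = l
      · subst hi
        have hs : ({l, l, j} : Finset (Fin n)) = {l, j} := by
          ext a; simp
        have hcard : ({l, j} : Finset (Fin n)).card = 2 := Finset.card_pair hij
        rw [hs, ncard_supersets _ (by rw [hcard]; omega), hcard]
        simp
      · by_cases hj : j = l
        · subst hj
          have hs : ({l, i, l} : Finset (Fin n)) = {l, i} := by
            ext a
            simp only [Finset.mem_insert, Finset.mem_singleton]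
            tauto
          have hcard : ({l, i} : Finset (Fin n)).card = 2 :=
            Finset.card_pair (Ne.symm hij)
          rw [hs, ncard_supersets _ (by rw [hcard]; omega), hcard]
          simp
        · have hcard : ({l, i, j} : Finset (Fin n)).card = 3 := by
            rw [Finset.card_insert_of_notMem (by simp [Ne.symm hi, Ne.symm hj]),
              Finset.card_pair hij]
          simp only [hi, hj, or_self, if_false]
          by_cases hk3 : 3 ≤ k
          · rw [ncard_supersets _ (by rw [hcard]; omega), hcard]
            have : bino (n - 3) ((k : ℤ) - 3) = (n - 3).choose (k - 3) := by
              unfold bino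
              rw [if_pos (by omega)]
              congr 1
              omega
            rw [this]
          · rw [ncard_supersets_zero _ (by omega)]
            have : bino (n - 3) ((k : ℤ) - 3) = 0 := by
              unfold bino
              rw [if_neg (by omega)]
            rw [this]
  rw [hAeq, charpoly_special (by omega) l]
end

section
/- Let k ≥ 2 and k < j ≤ n−1, and let H be the k-uniform threshold hypergraph with binary sequence whose first j−1 entries are 0 and whose last q = n−j+1 entries are 1. Then −C(n−2, k−2) is an eigenvalue of the adjacency matrix of H with multiplicity at least q − 1, and −(Σ_{i=1}^{q} C(n−(i+2), k−3)) is an eigenvalue with multiplicity at least j − 2. -/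
/-!
If the columns of `A` at `x ≠ y` agree off `{x, y}`, `A y y = A x x` and `A y x = A x y`, then
`e_x - e_y` is an eigenvector for `A x x - A x y`; a class of `m` pairwise such twins gives the
`m - 1` independent eigenvectors `e_x - e_{x₀}`.

For a monotone sequence `b` a `k`-set is an edge iff it meets the `1`-block, so a pair `{x, y}`
lies in `C(n-2, k-2)` edges minus the `k`-subsets of the `0`-block containing it. Hence both
blocks are twin classes: on the `1`-block (of size `q`) the adjacency matrix is constant
`C(n-2, k-2)`, on the `0`-block (of size `j - 1`) it is constant `C(n-2, k-2) - C(j-3, k-2)`,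
which is the sum in the statement by the hockey-stick identity.
-/

open Finset Module

section TwinEigenvectors

variable {ι : Type*} [DecidableEq ι]

theorem single_sub_single_mem_eigenspace {K : Type*} [CommRing K] [Fintype ι] (A : Matrix ι ι K)
    {x y : ι} (hxy : x ≠ y) (hyy : A y y = A x x) (hyx : A y x = A x y)
    (htwin : ∀ z, z ≠ x → z ≠ y → A z x = A z y) :
    (Pi.single x 1 - Pi.single y 1 : ι → K) ∈
      End.eigenspace (Matrix.toLin' A) (A x x - A x y) := by
  rw [End.mem_eigenspace_iff, Matrix.toLin'_apply, Matrix.mulVec_sub, Matrix.mulVec_single_one,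
    Matrix.mulVec_single_one]
  ext z
  simp only [Pi.sub_apply, Matrix.col_apply, Pi.smul_apply, Pi.single_apply, smul_eq_mul]
  by_cases hzx : z = x
  · subst hzx
    simp [hxy]
  by_cases hzy : z = y
  · subst hzy
    simp [hzx, hyy, hyx]
  simp [hzx, hzy, htwin z hzx hzy]

theorem linearIndependent_single_sub_single {K : Type*} [Ring K] {s : Finset ι} {x₀ : ι}
    (hx₀ : x₀ ∉ s) :
    LinearIndependent K (fun x : s => (Pi.single (x : ι) 1 - Pi.single x₀ 1 : ι → K)) := by
  rw [Fintype.linearIndependent_iff]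
  intro g hg x
  have hx : (x : ι) ≠ x₀ := fun h => hx₀ (h ▸ x.2)
  have hx' := congrFun hg x
  simp only [Finset.sum_apply, Pi.smul_apply, Pi.sub_apply, Pi.single_apply, if_neg hx, sub_zero,
    smul_eq_mul, mul_ite, mul_one, mul_zero, Pi.zero_apply, Subtype.coe_inj] at hx'
  simpa using hx'

theorem card_sub_one_le_finrank_eigenspace {K : Type*} [Field K] [Fintype ι] (A : Matrix ι ι K)
    (s : Finset ι) (d c : K)
    (hdiag : ∀ x ∈ s, A x x = d) (hoff : ∀ x ∈ s, ∀ y ∈ s, x ≠ y → A x y = c)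
    (hout : ∀ z ∉ s, ∀ x ∈ s, ∀ y ∈ s, A z x = A z y) :
    #s - 1 ≤ finrank K (End.eigenspace (Matrix.toLin' A) (d - c)) := by
  obtain rfl | ⟨x₀, hx₀⟩ := s.eq_empty_or_nonempty
  · simp
  have hmem : ∀ x : s.erase x₀, (Pi.single (x : ι) 1 - Pi.single x₀ 1 : ι → K) ∈
      End.eigenspace (Matrix.toLin' A) (d - c) := by
    rintro ⟨x, hx⟩
    obtain ⟨hne, hxs⟩ := mem_erase.mp hx
    have htwin : ∀ z, z ≠ x → z ≠ x₀ → A z x = A z x₀ := by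
      intro z hzx hzx₀
      by_cases hz : z ∈ s
      · rw [hoff z hz x hxs hzx, hoff z hz x₀ hx₀ hzx₀]
      · exact hout z hz x hxs x₀ hx₀
    have h := single_sub_single_mem_eigenspace A hne (by rw [hdiag x hxs, hdiag x₀ hx₀])
      (by rw [hoff x₀ hx₀ x hxs hne.symm, hoff x hxs x₀ hx₀ hne]) htwin
    rwa [hdiag x hxs, hoff x hxs x₀ hx₀ hne] at h
  have hind := linearIndependent_single_sub_single (K := K) (notMem_erase x₀ s)
  calc #s - 1 = #(s.erase x₀) := (card_erase_of_mem hx₀).symm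
    _ = finrank K (Submodule.span K (Set.range fun x : s.erase x₀ =>
          (Pi.single (x : ι) 1 - Pi.single x₀ 1 : ι → K))) := by
      rw [finrank_span_eq_card hind, Fintype.card_coe]
    _ ≤ _ := Submodule.finrank_mono (Submodule.span_le.mpr (Set.range_subset_iff.mpr hmem))

end TwinEigenvectors

theorem bino_sub_one_add_choose (m r : ℕ) :
    bino m ((r : ℤ) - 1) + m.choose r = (m + 1).choose r := by
  cases r with
  | zero => simp [bino]
  | succ r => simp [bino, Nat.choose_succ_succ']

theorem sum_Icc_bino_add_choose {p q : ℕ} (hq : q ≤ p) (r : ℕ) :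
    ∑ i ∈ Icc 1 q, bino (p - i) ((r : ℤ) - 1) + (p - q).choose r = p.choose r := by
  induction q with
  | zero => simp
  | succ q ih =>
    have pascal := bino_sub_one_add_choose (p - (q + 1)) r
    rw [show p - (q + 1) + 1 = p - q by omega] at pascal
    rw [sum_Icc_succ_top (by omega)]
    linarith [ih (by omega)]

section MonotoneThreshold

variable {n k : ℕ} {b : Fin n → Bool}

theorem isEdge_iff_of_monotone (hb : Monotone b) (e : Finset (Fin n)) :
    isEdge n k b e ↔ #e = k ∧ ∃ i ∈ e, b i = true := by
  refine ⟨fun ⟨hcard, i, hi, _, hbi⟩ => ⟨hcard, i, hi, hbi⟩,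
    fun ⟨hcard, i, hi, hbi⟩ => ?_⟩
  have hne : e.Nonempty := ⟨i, hi⟩
  refine ⟨hcard, e.max' hne, e.max'_mem hne, fun y hy => e.le_max' y hy, ?_⟩
  exact Bool.le_iff_imp.mp (hb (e.le_max' i hi)) hbi

theorem edgeCount_add_card_of_monotone (hb : Monotone b) (x y : Fin n) :
    edgeCount n k b x y + #{e ∈ (univ.filter (b · = false)).powersetCard k | {x, y} ⊆ e}
      = #{e ∈ (univ : Finset (Fin n)).powersetCard k | {x, y} ⊆ e} := by
  have hedges : {e : Finset (Fin n) | isEdge n k b e ∧ x ∈ e ∧ y ∈ e}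
      = ↑{e ∈ {e ∈ (univ : Finset (Fin n)).powersetCard k | {x, y} ⊆ e} |
          ∃ i ∈ e, b i = true} := by
    ext e
    simp only [isEdge_iff_of_monotone hb, Set.mem_ofPred_eq, insert_subset_iff,
      singleton_subset_iff, coe_filter, mem_filter, mem_powersetCard, subset_univ, true_and]
    tauto
  have hnonedges : {e ∈ (univ.filter (b · = false)).powersetCard k | {x, y} ⊆ e}
      = {e ∈ {e ∈ (univ : Finset (Fin n)).powersetCard k | {x, y} ⊆ e} |
          ¬ ∃ i ∈ e, b i = true} := by
    ext e
    simp only [subset_iff, mem_insert, mem_singleton, forall_eq_or_imp, forall_eq, mem_filter,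
      mem_powersetCard, mem_univ, true_and, not_exists, not_and, Bool.not_eq_true]
    tauto
  rw [edgeCount, hedges, Set.ncard_coe_finset, hnonedges]
  exact card_filter_add_card_filter_not _

theorem card_filter_pair_subset_powersetCard {t : Finset (Fin n)} {x y : Fin n} (hxy : x ≠ y)
    (hx : x ∈ t) (hy : y ∈ t) (hk : 2 ≤ k) :
    #{e ∈ t.powersetCard k | {x, y} ⊆ e} = (#t - 2).choose (k - 2) := by
  rw [card_filter_powersetCard_subset _ _ _ (insert_subset_iff.mpr ⟨hx, by simpa using hy⟩)
    (by rw [card_pair hxy]; exact hk), card_pair hxy]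

theorem edgeCount_of_monotone_of_true (hb : Monotone b) (hk : 2 ≤ k) {x y : Fin n} (hxy : x ≠ y)
    (h : b x = true ∨ b y = true) :
    edgeCount n k b x y = (n - 2).choose (k - 2) := by
  have hlow : #{e ∈ (univ.filter (b · = false)).powersetCard k | {x, y} ⊆ e} = 0 := by
    rw [card_eq_zero, filter_eq_empty_iff]
    intro e he hxye
    have hsub := (mem_powersetCard.mp he).1
    rcases h with h | h
    · simpa [h] using hsub (hxye (mem_insert_self x {y}))
    · simpa [h] using hsub (hxye (mem_insert_of_mem (mem_singleton_self y)))
  have := edgeCount_add_card_of_monotone (k := k) hb x y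
  rwa [hlow, add_zero, card_filter_pair_subset_powersetCard hxy (mem_univ x) (mem_univ y) hk,
    card_univ, Fintype.card_fin] at this

theorem edgeCount_add_choose_of_monotone_of_false (hb : Monotone b) (hk : 2 ≤ k) {x y : Fin n}
    (hxy : x ≠ y) (hx : b x = false) (hy : b y = false) :
    edgeCount n k b x y + (#{i | b i = false} - 2).choose (k - 2) = (n - 2).choose (k - 2) := by
  have := edgeCount_add_card_of_monotone (k := k) hb x y
  rwa [card_filter_pair_subset_powersetCard hxy (by simpa using hx) (by simpa using hy) hk,
    card_filter_pair_subset_powersetCard hxy (mem_univ x) (mem_univ y) hk,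
    card_univ, Fintype.card_fin] at this

theorem adjMat_self (x : Fin n) : adjMat n k b x x = 0 := by
  simp [adjMat]

theorem adjMat_of_ne {x y : Fin n} (hxy : x ≠ y) : adjMat n k b x y = edgeCount n k b x y := by
  simp [adjMat, hxy]

theorem card_filter_true_sub_one_le_eigMult (hb : Monotone b) (hk : 2 ≤ k) :
    #{i | b i = true} - 1 ≤ eigMult n (adjMat n k b) (-((n - 2).choose (k - 2) : ℝ)) := by
  have hC : ∀ x y, x ≠ y → b x = true ∨ b y = true →
      adjMat n k b x y = ((n - 2).choose (k - 2) : ℝ) := fun x y hxy h => by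
    rw [adjMat_of_ne hxy, edgeCount_of_monotone_of_true hb hk hxy h]
  have := card_sub_one_le_finrank_eigenspace (adjMat n k b) {i | b i = true} 0
    ((n - 2).choose (k - 2)) (fun x _ => adjMat_self x)
    (fun x hx y _ hxy => hC x y hxy (.inl (by simpa using hx)))
    (fun z hz x hx y hy => by
      simp only [mem_filter, mem_univ, true_and] at hz hx hy
      rw [hC z x (by rintro rfl; exact hz hx) (.inr hx),
        hC z y (by rintro rfl; exact hz hy) (.inr hy)])
  rwa [zero_sub] at this

theorem card_filter_false_sub_one_le_eigMult (hb : Monotone b) (hk : 2 ≤ k) :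
    #{i | b i = false} - 1 ≤ eigMult n (adjMat n k b)
      (-(((n - 2).choose (k - 2) - (#{i | b i = false} - 2).choose (k - 2) : ℕ) : ℝ)) := by
  have := card_sub_one_le_finrank_eigenspace (adjMat n k b) {i | b i = false} 0
    (((n - 2).choose (k - 2) - (#{i | b i = false} - 2).choose (k - 2) : ℕ) : ℝ)
    (fun x _ => adjMat_self x)
    (fun x hx y hy hxy => by
      simp only [mem_filter, mem_univ, true_and] at hx hy
      rw [adjMat_of_ne hxy, Nat.eq_sub_of_add_eq
        (edgeCount_add_choose_of_monotone_of_false hb hk hxy hx hy)])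
    (fun z hz x hx y hy => by
      simp only [mem_filter, mem_univ, true_and, Bool.not_eq_false] at hz hx hy
      have hzx : z ≠ x := by rintro rfl; simp_all
      have hzy : z ≠ y := by rintro rfl; simp_all
      rw [adjMat_of_ne hzx, adjMat_of_ne hzy, edgeCount_of_monotone_of_true hb hk hzx (.inl hz),
        edgeCount_of_monotone_of_true hb hk hzy (.inl hz)])
  rwa [zero_sub] at this

end MonotoneThreshold

theorem monotone_decide_le_val (n m : ℕ) : Monotone fun i : Fin n => decide (m ≤ (i : ℕ)) :=
  fun x y hxy => Bool.le_iff_imp.mpr fun h => by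
    simp only [decide_eq_true_eq] at h ⊢
    exact h.trans (Fin.le_def.mp hxy)

theorem card_filter_decide_le_val_eq_false {n m : ℕ} (hm : m ≤ n) :
    #{i : Fin n | decide (m ≤ (i : ℕ)) = false} = m := by
  rw [filter_congr (q := fun i : Fin n => (i : ℕ) < m) (fun i _ => by simp),
    Fin.card_filter_val_lt, min_eq_right hm]

/-- For the `k`-uniform threshold hypergraph whose binary sequence has its first
`j - 1` entries `0` and its last `q = n - j + 1` entries `1` (`k < j ≤ n - 1`):
`-C(n-2, k-2)` is an eigenvalue of the adjacency matrix with multiplicity at least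
`q - 1`, and `-(Σ_{i=1}^{q} C(n-(i+2), k-3))` is an eigenvalue with multiplicity at
least `j - 2`. -/
theorem two_blocks_eigenvalues (n k j : ℕ) (hk : 2 ≤ k) (hkj : k < j) (hjn : j ≤ n - 1) :
    (n - j + 1) - 1 ≤
      eigMult n (adjMat n k (fun i => decide (j - 1 ≤ (i : ℕ))))
        (-(((n - 2).choose (k - 2) : ℕ) : ℝ)) ∧
    j - 2 ≤
      eigMult n (adjMat n k (fun i => decide (j - 1 ≤ (i : ℕ))))
        (-((∑ i ∈ Finset.Icc 1 (n - j + 1), bino (n - (i + 2)) ((k : ℤ) - 3) : ℕ) : ℝ)) := by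
  set b : Fin n → Bool := fun i => decide (j - 1 ≤ (i : ℕ))
  have hb : Monotone b := monotone_decide_le_val n (j - 1)
  have hfalse : #{i | b i = false} = j - 1 := card_filter_decide_le_val_eq_false (by omega)
  have htrue : #{i | b i = true} = n - j + 1 := by
    have := card_filter_add_card_filter_not (s := univ) (fun i => b i = true)
    simp only [Bool.not_eq_true, card_univ, Fintype.card_fin, hfalse] at this
    omega
  have hsum : ∑ i ∈ Icc 1 (n - j + 1), bino (n - (i + 2)) ((k : ℤ) - 3)
      = (n - 2).choose (k - 2) - (#{i | b i = false} - 2).choose (k - 2) := by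
    have := sum_Icc_bino_add_choose (p := n - 2) (q := n - j + 1) (by omega) (k - 2)
    have hterm : ∀ i ∈ Icc 1 (n - j + 1),
        bino (n - 2 - i) (((k - 2 : ℕ) : ℤ) - 1) = bino (n - (i + 2)) ((k : ℤ) - 3) :=
      fun i _ => by congr 1 <;> omega
    rw [sum_congr rfl hterm, show n - 2 - (n - j + 1) = #{i | b i = false} - 2 by omega] at this
    omega
  constructor
  · simpa [htrue] using card_filter_true_sub_one_le_eigMult (k := k) hb hk
  · rw [hsum]
    simpa [hfalse] using card_filter_false_sub_one_le_eigMult (k := k) hb hk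
end

section
/- Let k ≥ 2 and n ≥ k+2, and let H be the k-uniform threshold hypergraph with binary sequence having 1 exactly at positions k and n. Then −C(n−3,k−3) is an eigenvalue of the adjacency matrix of H with multiplicity at least n−k−2, and −(C(n−3,k−3)+1) is an eigenvalue with multiplicity at least k−1. -/
open Finset in
lemma count_supersets {α : Type*} [Fintype α] [DecidableEq α] (t : Finset α) (k : ℕ) :
    (Finset.univ.filter (fun e : Finset α => e.card = k ∧ t ⊆ e)).card =
      if t.card ≤ k then (Fintype.card α - t.card).choose (k - t.card) else 0 := by
  split_ifs with h
  · rw [show (Fintype.card α - t.card).choose (k-t.card) = (Finset.powersetCard (k - t.card) tᶜ).card by rw [Finset.card_powersetCard, Finset.card_compl]]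
    apply Finset.card_bij' (fun e _ => e \ t) (fun u _ => u ∪ t)
    · intro e he
      simp only [Finset.mem_filter, Finset.mem_univ, true_and] at he
      rw [Finset.mem_powersetCard]
      refine ⟨fun a ha => ?_, ?_⟩
      · simp only [Finset.mem_sdiff] at ha
        simp [Finset.mem_compl, ha.2]
      · rw [Finset.card_sdiff_of_subset he.2, he.1]
    · intro u hu
      rw [Finset.mem_powersetCard] at hu
      simp only [Finset.mem_filter, Finset.mem_univ, true_and]
      have hdisj : Disjoint u t := by
        rw [Finset.disjoint_right]
        intro a hat hau
        exact (Finset.mem_compl.mp (hu.1 hau)) hat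
      constructor
      · rw [Finset.card_union_of_disjoint hdisj, hu.2]
        omega
      · exact Finset.subset_union_right
    · intro e he
      simp only [Finset.mem_filter, Finset.mem_univ, true_and] at he
      exact Finset.sdiff_union_of_subset he.2
    · intro u hu
      rw [Finset.mem_powersetCard] at hu
      rw [Finset.union_sdiff_right]
      exact Finset.sdiff_eq_self_of_disjoint
        (Finset.disjoint_left.mpr fun a hau hat => (Finset.mem_compl.mp (hu.1 hau)) hat)
  · rw [Finset.card_eq_zero, Finset.filter_eq_empty_iff]
    intro e _
    rintro ⟨hc, hsub⟩
    exact h (hc ▸ Finset.card_le_card hsub)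

def tb (n k : ℕ) : Fin n → Bool := fun i => decide ((i : ℕ) = k - 1 ∨ (i : ℕ) = n - 1)

def lastv (n k : ℕ) (hn : k + 2 ≤ n) : Fin n := ⟨n - 1, by omega⟩

def Kset (n k : ℕ) : Finset (Fin n) := Finset.univ.filter (fun i => (i : ℕ) < k)

def m3 (n k : ℕ) : ℕ := if 3 ≤ k then (n-3).choose (k-3) else 0

lemma bino_eq_m3 (n k : ℕ) : bino (n-3) ((k:ℤ)-3) = m3 n k := by
  unfold bino m3
  rcases le_or_gt 3 k with h | h
  · rw [if_pos (by omega), if_pos h]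
    congr 1
    omega
  · rw [if_neg (by omega), if_neg (by omega)]

lemma mem_Kset (n k : ℕ) (i : Fin n) : i ∈ Kset n k ↔ (i : ℕ) < k := by
  simp [Kset]

lemma Kset_card (n k : ℕ) (hn : k + 2 ≤ n) : (Kset n k).card = k := by
  have : Kset n k = Finset.Iio (⟨k, by omega⟩ : Fin n) := by
    ext i
    simp [Kset, Fin.lt_def]
  rw [this, Fin.card_Iio]

lemma lastv_not_mem_Kset (n k : ℕ) (hn : k + 2 ≤ n) : lastv n k hn ∉ Kset n k := by
  simp [Kset, lastv]; omega

lemma edge_iff (n k : ℕ) (hk : 2 ≤ k) (hn : k + 2 ≤ n) (e : Finset (Fin n)) :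
    isEdge n k (tb n k) e ↔ e.card = k ∧ (lastv n k hn ∈ e ∨ e = Kset n k) := by
  constructor
  · rintro ⟨hcard, j, hj, hmax, hb⟩
    refine ⟨hcard, ?_⟩
    simp only [tb, decide_eq_true_eq] at hb
    rcases hb with hb | hb
    · right
      apply Finset.eq_of_subset_of_card_le
      · intro i hi
        rw [mem_Kset]
        have : (i : ℕ) ≤ (j : ℕ) := hmax i hi
        omega
      · rw [Kset_card n k hn, hcard]
    · left
      have : j = lastv n k hn := by simp [lastv, Fin.ext_iff, hb]
      exact this ▸ hj
  · rintro ⟨hcard, h | rfl⟩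
    · refine ⟨hcard, lastv n k hn, h, fun i _ => ?_, ?_⟩
      · show (i : ℕ) ≤ n - 1
        omega
      · simp [tb, lastv]
    · refine ⟨hcard, ⟨k - 1, by omega⟩, ?_, fun i hi => ?_, ?_⟩
      · rw [mem_Kset]; show k - 1 < k; omega
      · rw [mem_Kset] at hi
        show (i : ℕ) ≤ k - 1
        omega
      · simp [tb]

lemma edgeCount_eq_s19 (n k : ℕ) (hk : 2 ≤ k) (hn : k + 2 ≤ n) (x y : Fin n) :
    edgeCount n k (tb n k) x y =
      (Finset.univ.filter (fun e : Finset (Fin n) =>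
        e.card = k ∧ ({lastv n k hn, x, y} : Finset (Fin n)) ⊆ e)).card
      + (if (x : ℕ) < k ∧ (y : ℕ) < k then 1 else 0) := by
  classical
  have hset : {e : Finset (Fin n) | isEdge n k (tb n k) e ∧ x ∈ e ∧ y ∈ e} =
      ↑(Finset.univ.filter (fun e : Finset (Fin n) =>
        (e.card = k ∧ (lastv n k hn ∈ e ∨ e = Kset n k)) ∧ x ∈ e ∧ y ∈ e)) := by
    ext e
    simp only [Set.mem_setOf_eq, Finset.coe_filter, Finset.mem_univ, true_and,
      edge_iff n k hk hn]
  rw [edgeCount, hset, Set.ncard_coe_finset]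
  rw [← Finset.card_filter_add_card_filter_not (s := Finset.univ.filter _)
    (fun e : Finset (Fin n) => lastv n k hn ∈ e)]
  congr 1
  · congr 1
    ext e
    simp only [Finset.mem_filter, Finset.mem_univ, true_and, Finset.insert_subset_iff,
      Finset.singleton_subset_iff]
    tauto
  · rw [Finset.filter_filter]
    rcases Classical.em ((x : ℕ) < k ∧ (y : ℕ) < k) with h | h
    · rw [if_pos h]
      have : (Finset.univ.filter (fun e : Finset (Fin n) =>
          ((e.card = k ∧ (lastv n k hn ∈ e ∨ e = Kset n k)) ∧ x ∈ e ∧ y ∈ e)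
            ∧ lastv n k hn ∉ e)) = {Kset n k} := by
        ext e
        simp only [Finset.mem_filter, Finset.mem_univ, true_and, Finset.mem_singleton]
        constructor
        · rintro ⟨⟨⟨hc, hl | rfl⟩, hx, hy⟩, hnl⟩
          · exact absurd hl hnl
          · rfl
        · rintro rfl
          exact ⟨⟨⟨Kset_card n k hn, Or.inr rfl⟩, (mem_Kset n k x).mpr h.1,
            (mem_Kset n k y).mpr h.2⟩, lastv_not_mem_Kset n k hn⟩
      rw [this, Finset.card_singleton]
    · rw [if_neg h]
      rw [Finset.card_eq_zero, Finset.filter_eq_empty_iff]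
      intro e _
      rintro ⟨⟨⟨hc, hl | rfl⟩, hx, hy⟩, hnl⟩
      · exact hnl hl
      · exact h ⟨(mem_Kset n k x).mp hx, (mem_Kset n k y).mp hy⟩

lemma adj_entry1 (n k : ℕ) (hk : 2 ≤ k) (hn : k + 2 ≤ n) (x y : Fin n) (hxy : x ≠ y)
    (hx : x ≠ lastv n k hn) (hy : y ≠ lastv n k hn) :
    adjMat n k (tb n k) x y =
      (m3 n k : ℝ) + (if (x : ℕ) < k ∧ (y : ℕ) < k then 1 else 0) := by
  classical
  rw [adjMat, if_neg hxy, edgeCount_eq_s19 n k hk hn x y]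
  have hcard : ({lastv n k hn, x, y} : Finset (Fin n)).card = 3 := by
    rw [Finset.card_insert_of_notMem (by simp [hx.symm, hy.symm] : lastv n k hn ∉ ({x, y} : Finset (Fin n))),
      Finset.card_insert_of_notMem (by simp [hxy]), Finset.card_singleton]
  rw [count_supersets, hcard, Fintype.card_fin]
  have : (if 3 ≤ k then (n - 3).choose (k - 3) else 0) = m3 n k := rfl
  rw [this]
  push_cast
  split_ifs <;> simp

lemma adj_entry_last (n k : ℕ) (hk : 2 ≤ k) (hn : k + 2 ≤ n) (y : Fin n)
    (hy : y ≠ lastv n k hn) :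
    adjMat n k (tb n k) (lastv n k hn) y = ((n-2).choose (k-2) : ℝ) := by
  classical
  rw [adjMat, if_neg (Ne.symm hy), edgeCount_eq_s19 n k hk hn _ y]
  have hins : ({lastv n k hn, lastv n k hn, y} : Finset (Fin n)) = {lastv n k hn, y} := by
    rw [Finset.insert_idem]
  rw [hins]
  have hcard : ({lastv n k hn, y} : Finset (Fin n)).card = 2 := by
    rw [Finset.card_insert_of_notMem (by simp [hy.symm]), Finset.card_singleton]
  rw [count_supersets, hcard, Fintype.card_fin, if_pos hk]
  have hnot : ¬ ((lastv n k hn : ℕ) < k ∧ (y : ℕ) < k) := by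
    intro h
    exact absurd h.1 (by simp [lastv]; omega)
  rw [if_neg hnot]
  push_cast
  ring

lemma mulVec_pair (n : ℕ) (A : Matrix (Fin n) (Fin n) ℝ) (p q : Fin n) :
    A.mulVec (Pi.single p 1 - Pi.single q 1) = fun x => A x p - A x q := by
  funext x
  simp [Matrix.mulVec_sub, Matrix.mulVec_single]

lemma li_single_sub (n r : ℕ) (g : Fin r → Fin n) (j0 : Fin n)
    (hginj : Function.Injective g) (hgj : ∀ i, g i ≠ j0) :
    LinearIndependent ℝ (fun i => (Pi.single (g i) (1:ℝ) - Pi.single j0 1 : Fin n → ℝ)) := by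
  rw [Fintype.linearIndependent_iff]
  intro c hc i
  have h := congrFun hc (g i)
  simp only [Finset.sum_apply, Pi.smul_apply, Pi.sub_apply, Pi.single_apply,
    Pi.zero_apply, smul_eq_mul] at h
  rw [if_neg (hgj i)] at h
  rw [Finset.sum_congr rfl (fun j _ => show c j * ((if g i = g j then (1:ℝ) else 0) - 0)
      = if j = i then c j else 0 by
    by_cases hji : j = i
    · subst hji; simp
    · rw [if_neg (fun h' => hji (hginj h'.symm)), if_neg hji]; ring)] at h
  rwa [Finset.sum_ite_eq' Finset.univ i c, if_pos (Finset.mem_univ i)] at h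

lemma le_finrank_of_li {V : Type*} [AddCommGroup V] [Module ℝ V] [FiniteDimensional ℝ V]
    {r : ℕ} (W : Submodule ℝ V) (v : Fin r → V) (hmem : ∀ i, v i ∈ W)
    (hli : LinearIndependent ℝ v) : r ≤ Module.finrank ℝ W := by
  have h2 : LinearIndependent ℝ (fun i => (⟨v i, hmem i⟩ : W)) := by
    apply LinearIndependent.of_comp W.subtype
    exact hli
  simpa using h2.fintype_card_le_finrank

lemma eig_ge (n : ℕ) (A : Matrix (Fin n) (Fin n) ℝ) (μ : ℝ) (r : ℕ)
    (g : Fin r → Fin n) (j0 : Fin n) (hginj : Function.Injective g)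
    (hgj : ∀ i, g i ≠ j0)
    (heig : ∀ i, A.mulVec (Pi.single (g i) 1 - Pi.single j0 1)
      = μ • (Pi.single (g i) 1 - Pi.single j0 1)) :
    r ≤ eigMult n A μ := by
  apply le_finrank_of_li _ (fun i => Pi.single (g i) (1:ℝ) - Pi.single j0 1)
  · intro i
    rw [Module.End.mem_eigenspace_iff, Matrix.toLin'_apply]
    exact heig i
  · exact li_single_sub n r g j0 hginj hgj

/-- For the `k`-uniform threshold hypergraph whose binary sequence is `1` exactly at
positions `k` and `n` (1-based), with `n ≥ k + 2`: `-C(n-3,k-3)` is an eigenvalue of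
the adjacency matrix with multiplicity at least `n - k - 2`, and `-(C(n-3,k-3) + 1)`
is an eigenvalue with multiplicity at least `k - 1`. -/
theorem three_blocks_eigenvalues (n k : ℕ) (hk : 2 ≤ k) (hn : k + 2 ≤ n) :
    n - k - 2 ≤
      eigMult n (adjMat n k (fun i => decide ((i : ℕ) = k - 1 ∨ (i : ℕ) = n - 1)))
        (-(bino (n - 3) ((k : ℤ) - 3) : ℝ)) ∧
    k - 1 ≤
      eigMult n (adjMat n k (fun i => decide ((i : ℕ) = k - 1 ∨ (i : ℕ) = n - 1)))
        (-((bino (n - 3) ((k : ℤ) - 3) : ℝ) + 1)) := by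
  have hbin : bino (n - 3) ((k : ℤ) - 3) = m3 n k := bino_eq_m3 n k
  rw [show (fun i : Fin n => decide ((i : ℕ) = k - 1 ∨ (i : ℕ) = n - 1)) = tb n k from rfl,
    hbin]
  have hdiag : ∀ z : Fin n, adjMat n k (tb n k) z z = 0 := by
    intro z
    simp [adjMat]
  constructor
  · -- middle block
    apply eig_ge n (adjMat n k (tb n k)) (-(m3 n k : ℝ)) (n - k - 2)
      (fun i : Fin (n - k - 2) => (⟨k + 1 + (i : ℕ), by omega⟩ : Fin n))
      (⟨k, by omega⟩ : Fin n)
    · intro a b hab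
      have := congrArg Fin.val hab
      simp only at this
      exact Fin.ext (by omega)
    · intro i h
      have := congrArg Fin.val h
      simp only at this
      omega
    · intro i
      set p : Fin n := ⟨k + 1 + (i : ℕ), by omega⟩ with hpdef
      set q : Fin n := ⟨k, by omega⟩ with hqdef
      have hp : (p : ℕ) = k + 1 + (i : ℕ) := rfl
      have hq : (q : ℕ) = k := rfl
      have hpq : p ≠ q := by
        intro h; have := congrArg Fin.val h; rw [hp, hq] at this; omega
      have hpl : p ≠ lastv n k hn := by
        intro h; have := congrArg Fin.val h
        rw [hp] at this; simp only [lastv] at this; omega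
      have hql : q ≠ lastv n k hn := by
        intro h; have := congrArg Fin.val h
        rw [hq] at this; simp only [lastv] at this; omega
      rw [mulVec_pair]
      funext x
      simp only [Pi.smul_apply, Pi.sub_apply, Pi.single_apply, smul_eq_mul]
      by_cases hxp : x = p
      · rw [hxp, hdiag, adj_entry1 n k hk hn p q hpq hpl hql,
          if_neg (by rw [hq]; omega : ¬((p : ℕ) < k ∧ (q : ℕ) < k)),
          if_pos rfl, if_neg hpq]
        ring
      · by_cases hxq : x = q
        · rw [hxq, hdiag, adj_entry1 n k hk hn q p (Ne.symm hpq) hql hpl,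
            if_neg (by rw [hp]; omega : ¬((q : ℕ) < k ∧ (p : ℕ) < k)),
            if_neg (fun h => hpq h.symm : ¬ q = p), if_pos rfl]
          ring
        · rw [if_neg hxp, if_neg hxq]
          by_cases hxl : x = lastv n k hn
          · rw [hxl]
            rw [adj_entry_last n k hk hn p hpl, adj_entry_last n k hk hn q hql]
            ring
          · rw [adj_entry1 n k hk hn x p hxp hxl hpl,
              adj_entry1 n k hk hn x q hxq hxl hql,
              if_neg (by rw [hp]; omega : ¬((x : ℕ) < k ∧ (p : ℕ) < k)),
              if_neg (by rw [hq]; omega : ¬((x : ℕ) < k ∧ (q : ℕ) < k))]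
            ring
  · -- low block
    apply eig_ge n (adjMat n k (tb n k)) (-((m3 n k : ℝ) + 1)) (k - 1)
      (fun i : Fin (k - 1) => (⟨(i : ℕ) + 1, by omega⟩ : Fin n))
      (⟨0, by omega⟩ : Fin n)
    · intro a b hab
      have := congrArg Fin.val hab
      simp only at this
      exact Fin.ext (by omega)
    · intro i h
      have := congrArg Fin.val h
      simp only at this
      omega
    · intro i
      set p : Fin n := ⟨(i : ℕ) + 1, by omega⟩ with hpdef
      set q : Fin n := ⟨0, by omega⟩ with hqdef
      have hp : (p : ℕ) = (i : ℕ) + 1 := rfl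
      have hq : (q : ℕ) = 0 := rfl
      have hpk : (p : ℕ) < k := by rw [hp]; exact (by omega : (i:ℕ) + 1 < k)
      have hqk : (q : ℕ) < k := by rw [hq]; omega
      have hpq : p ≠ q := by
        intro h; have := congrArg Fin.val h; rw [hp, hq] at this; omega
      have hpl : p ≠ lastv n k hn := by
        intro h; have := congrArg Fin.val h
        rw [hp] at this; simp only [lastv] at this; omega
      have hql : q ≠ lastv n k hn := by
        intro h; have := congrArg Fin.val h
        rw [hq] at this; simp only [lastv] at this; omega
      rw [mulVec_pair]
      funext x
      simp only [Pi.smul_apply, Pi.sub_apply, Pi.single_apply, smul_eq_mul]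
      by_cases hxp : x = p
      · rw [hxp, hdiag, adj_entry1 n k hk hn p q hpq hpl hql,
          if_pos ⟨hpk, hqk⟩, if_pos rfl, if_neg hpq]
        ring
      · by_cases hxq : x = q
        · rw [hxq, hdiag, adj_entry1 n k hk hn q p (Ne.symm hpq) hql hpl,
            if_pos ⟨hqk, hpk⟩,
            if_neg (fun h => hpq h.symm : ¬ q = p), if_pos rfl]
          ring
        · rw [if_neg hxp, if_neg hxq]
          by_cases hxl : x = lastv n k hn
          · rw [hxl]
            rw [adj_entry_last n k hk hn p hpl, adj_entry_last n k hk hn q hql]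
            ring
          · rw [adj_entry1 n k hk hn x p hxp hxl hpl,
              adj_entry1 n k hk hn x q hxq hxl hql]
            have hiff : (((x : ℕ) < k ∧ (p : ℕ) < k)) ↔ (((x : ℕ) < k ∧ (q : ℕ) < k)) := by
              constructor <;> (rintro ⟨h1, -⟩; exact ⟨h1, by omega⟩)
            rw [if_congr hiff rfl rfl]
            ring
end
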